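/- Let {x^k} be a sequence generated by Algorithm 3.1 with data M > 0 and x⁰. Suppose there is a real r > 0 such that M is a Lipschitz constant of f on the closed ball B(x⁰, r), the closed ball B(x⁰, r/2) contains a point of Q, and the envelope f is strictly convex. Then the sequence {x^k} converges to some point x* with f(x*) ≤ 0 (i.e., x* ∈ Q). -/

import Mathlib

open Filter Topology

noncomputable section

abbrev Euc (n : ℕ) := EuclideanSpace ℝ (Fin n)

/-- `ξ` is a subgradient of `g` at `x`. -/
def IsSubgradAt {n : ℕ} (g : Euc n → ℝ) (x ξ : Euc n) : Prop :=
  ∀ y : Euc n, g x + (inner ℝ ξ (y - x) : ℝ) ≤ g y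

/-- The envelope `f(x) = max_i f_i(x)` of finitely many functions. -/
def envl {n m : ℕ} [NeZero m] (f : Fin m → Euc n → ℝ) (x : Euc n) : ℝ :=
  Finset.univ.sup' Finset.univ_nonempty fun i => f i x

/-- The sequence `x` with relaxation parameters `lam` is generated by Algorithm 3.1
with data `M` for the family `f`. -/
def IsAlgSeq {n m : ℕ} [NeZero m] (f : Fin m → Euc n → ℝ) (M : ℝ)
    (x : ℕ → Euc n) (lam : ℕ → ℝ) : Prop :=
  ∀ k : ℕ, 0 ≤ lam k ∧
    max 0 (envl f (x k)) ≤ lam k * M ^ 2 ∧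
    lam k * M ^ 2 ≤ 2 * max 0 (envl f (x k)) ∧
    ∃ (w : Fin m → ℝ) (ξ : Fin m → Euc n),
      (∀ i, 0 ≤ w i) ∧ (∑ i, w i) = 1 ∧
      (∀ i, f i (x k) < envl f (x k) → w i = 0) ∧
      (∀ i, IsSubgradAt (f i) (x k) (ξ i)) ∧
      x (k + 1) = x k - lam k • ∑ i, w i • ξ i

/-! Write `g` for the envelope and `Φ(a, z) = g a + g z - 2 g ((a + z) / 2)` for its midpoint gap,
which is positive for `a ≠ z` by strict convexity. A convex combination of active subgradients
is a subgradient `ν` of `g`, and the subgradient inequality at the midpoint of `x^k` and `z`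
sharpens to `⟪ν, x^k - z⟫ ≥ g x^k - g z + Φ(x^k, z)`. As long as `‖ν‖ ≤ M`, the step rule gives
`λ_k ² ‖ν‖² ≤ 2 λ_k g⁺(x^k)`, whence the Fejér estimate
`‖x^{k+1} - z‖² + 2 λ_k Φ(x^k, z) ≤ ‖x^k - z‖² + 2 λ_k g z`.
For the feasible `z` within `r / 2` of `x⁰` the decrease is strict while `g x^k > 0`, so the
iterates stay in the open ball `B(x⁰, r)`, where the Lipschitz bound does give `‖ν‖ ≤ M`.
Summing, `∑ λ_k Φ(x^k, z) < ∞`; at a cluster point `x̄ ≠ z` the gap stays away from `0`, so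
`λ_k → 0` along the subsequence and `g x̄ ≤ lim λ_k M² = 0`. Being Fejér monotone with respect
to the feasible point `x̄`, the whole sequence converges to it. -/

open Metric

lemma le_envl {n m : ℕ} [NeZero m] (f : Fin m → Euc n → ℝ) (i : Fin m) (y : Euc n) :
    f i y ≤ envl f y :=
  Finset.le_sup' (fun j => f j y) (Finset.mem_univ i)

lemma isSubgradAt_envl_sum {n m : ℕ} [NeZero m] {f : Fin m → Euc n → ℝ} {a : Euc n}
    {w : Fin m → ℝ} {ξ : Fin m → Euc n} (hw0 : ∀ i, 0 ≤ w i) (hw1 : ∑ i, w i = 1)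
    (hact : ∀ i, f i a < envl f a → w i = 0) (hξ : ∀ i, IsSubgradAt (f i) a (ξ i)) :
    IsSubgradAt (envl f) a (∑ i, w i • ξ i) := by
  intro y
  have hactive : ∀ i, w i * f i a = w i * envl f a := fun i => by
    rcases (le_envl f i a).lt_or_eq with h | h
    · simp [hact i h]
    · rw [h]
  calc envl f a + inner ℝ (∑ i, w i • ξ i) (y - a)
      = ∑ i, w i * (f i a + inner ℝ (ξ i) (y - a)) := by
        simp only [mul_add, Finset.sum_add_distrib, hactive, ← Finset.sum_mul, hw1, one_mul,
          sum_inner, real_inner_smul_left]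
    _ ≤ ∑ i, w i * envl f y := Finset.sum_le_sum fun i _ =>
        mul_le_mul_of_nonneg_left ((hξ i y).trans (le_envl f i y)) (hw0 i)
    _ = envl f y := by rw [← Finset.sum_mul, hw1, one_mul]

lemma IsSubgradAt.norm_le_of_lipschitzOn_closedBall {n : ℕ} {g : Euc n → ℝ} {a ν x0 : Euc n}
    {r M : ℝ} (hν : IsSubgradAt g a ν) (hM : 0 ≤ M)
    (hLip : ∀ y z : Euc n, y ∈ closedBall x0 r → z ∈ closedBall x0 r →
      |g y - g z| ≤ M * ‖y - z‖)
    (ha : a ∈ ball x0 r) : ‖ν‖ ≤ M := by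
  -- test the subgradient inequality at `a + t • ν` in the ball; the `+ 1` covers `ν = 0`
  set t := (r - dist a x0) / (‖ν‖ + 1)
  have ht : 0 < t := div_pos (sub_pos.2 ha) (by positivity)
  have hstep : t * ‖ν‖ ≤ r - dist a x0 := by
    rw [div_mul_eq_mul_div, div_le_iff₀ (by positivity)]
    nlinarith [mem_ball.1 ha, norm_nonneg ν]
  have hy : a + t • ν ∈ closedBall x0 r := by
    rw [mem_closedBall]
    calc dist (a + t • ν) x0 ≤ dist (a + t • ν) a + dist a x0 := dist_triangle _ _ _
      _ = t * ‖ν‖ + dist a x0 := by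
        rw [dist_eq_norm, add_sub_cancel_left, norm_smul, Real.norm_of_nonneg ht.le]
      _ ≤ r := by linarith
  have hsub := hν (a + t • ν)
  have hlip := hLip _ _ hy (ball_subset_closedBall ha)
  rw [add_sub_cancel_left, real_inner_smul_right, real_inner_self_eq_norm_sq] at hsub
  rw [add_sub_cancel_left, norm_smul, Real.norm_of_nonneg ht.le] at hlip
  have : t * ‖ν‖ ^ 2 ≤ t * (M * ‖ν‖) := by
    linarith [le_abs_self (g (a + t • ν) - g a)]
  nlinarith [le_of_mul_le_mul_left this ht, norm_nonneg ν]

section MidGap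

variable {E : Type*} [AddCommGroup E] [Module ℝ E] {g : E → ℝ}

def midGap (g : E → ℝ) (a z : E) : ℝ :=
  g a + g z - 2 * g ((1 / 2 : ℝ) • a + (1 / 2 : ℝ) • z)

lemma ConvexOn.midGap_nonneg (hg : ConvexOn ℝ Set.univ g) (a z : E) : 0 ≤ midGap g a z := by
  have := hg.2 (Set.mem_univ a) (Set.mem_univ z) (by norm_num : (0 : ℝ) ≤ 1 / 2)
    (by norm_num : (0 : ℝ) ≤ 1 / 2) (by norm_num)
  simp only [smul_eq_mul] at this
  unfold midGap
  linarith

lemma StrictConvexOn.midGap_pos (hg : StrictConvexOn ℝ Set.univ g) {a z : E} (h : a ≠ z) :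
    0 < midGap g a z := by
  have := hg.2 (Set.mem_univ a) (Set.mem_univ z) h (by norm_num : (0 : ℝ) < 1 / 2)
    (by norm_num : (0 : ℝ) < 1 / 2) (by norm_num)
  simp only [smul_eq_mul] at this
  unfold midGap
  linarith

lemma Continuous.midGap [TopologicalSpace E] [IsTopologicalAddGroup E] [ContinuousSMul ℝ E]
    (hg : Continuous g) (z : E) : Continuous fun a => midGap g a z := by
  unfold _root_.midGap
  fun_prop

end MidGap

lemma IsSubgradAt.sub_add_midGap_le_inner {n : ℕ} {g : Euc n → ℝ} {a ν : Euc n}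
    (hν : IsSubgradAt g a ν) (z : Euc n) :
    g a - g z + midGap g a z ≤ inner ℝ ν (a - z) := by
  have h := hν ((1 / 2 : ℝ) • a + (1 / 2 : ℝ) • z)
  have hdir : (1 / 2 : ℝ) • a + (1 / 2 : ℝ) • z - a = (-(1 / 2) : ℝ) • (a - z) := by module
  rw [hdir, real_inner_smul_right] at h
  unfold midGap
  linarith

structure IsPolyakSeq {n : ℕ} (g : Euc n → ℝ) (M : ℝ) (x ν : ℕ → Euc n) (lam : ℕ → ℝ) :
    Prop where
  subgrad : ∀ k, IsSubgradAt g (x k) (ν k)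
  step : ∀ k, x (k + 1) = x k - lam k • ν k
  lam_nonneg : ∀ k, 0 ≤ lam k
  max_le_lam_mul : ∀ k, max 0 (g (x k)) ≤ lam k * M ^ 2
  lam_mul_le : ∀ k, lam k * M ^ 2 ≤ 2 * max 0 (g (x k))

lemma IsAlgSeq.exists_isPolyakSeq {n m : ℕ} [NeZero m] {f : Fin m → Euc n → ℝ} {M : ℝ}
    {x : ℕ → Euc n} {lam : ℕ → ℝ} (h : IsAlgSeq f M x lam) :
    ∃ ν, IsPolyakSeq (envl f) M x ν lam := by
  choose hlam0 hle hge w ξ hw0 hw1 hact hξ hstep using h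
  exact ⟨fun k => ∑ i, w k i • ξ k i,
    ⟨fun k => isSubgradAt_envl_sum (hw0 k) (hw1 k) (hact k) (hξ k), hstep, hlam0, hle, hge⟩⟩

namespace IsPolyakSeq

variable {n : ℕ} {g : Euc n → ℝ} {M : ℝ} {x ν : ℕ → Euc n} {lam : ℕ → ℝ} {k : ℕ} {z : Euc n}

lemma le_lam_mul (hx : IsPolyakSeq g M x ν lam) (k : ℕ) : g (x k) ≤ lam k * M ^ 2 :=
  (le_max_right _ _).trans (hx.max_le_lam_mul k)

lemma lam_eq_zero (hx : IsPolyakSeq g M x ν lam) (hM : M ≠ 0) (hk : g (x k) ≤ 0) :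
    lam k = 0 := by
  have h := hx.lam_mul_le k
  rw [max_eq_left hk, mul_zero] at h
  exact le_antisymm (nonpos_of_mul_nonpos_left h (by positivity)) (hx.lam_nonneg k)

lemma succ_eq_of_nonpos (hx : IsPolyakSeq g M x ν lam) (hM : M ≠ 0) (hk : g (x k) ≤ 0) :
    x (k + 1) = x k := by
  rw [hx.step k, hx.lam_eq_zero hM hk, zero_smul, sub_zero]

lemma lam_mul_max (hx : IsPolyakSeq g M x ν lam) (hM : M ≠ 0) (k : ℕ) :
    lam k * max 0 (g (x k)) = lam k * g (x k) := by
  rcases le_total (g (x k)) 0 with hk | hk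
  · simp [hx.lam_eq_zero hM hk]
  · rw [max_eq_right hk]

lemma sq_norm_sub_succ_add_le (hx : IsPolyakSeq g M x ν lam) (hM : M ≠ 0) (hνk : ‖ν k‖ ≤ M)
    (z : Euc n) :
    ‖x (k + 1) - z‖ ^ 2 + 2 * lam k * midGap g (x k) z ≤
      ‖x k - z‖ ^ 2 + 2 * lam k * g z := by
  have hlam := hx.lam_nonneg k
  have hexp : ‖x (k + 1) - z‖ ^ 2 =
      ‖x k - z‖ ^ 2 - 2 * lam k * inner ℝ (ν k) (x k - z) + lam k ^ 2 * ‖ν k‖ ^ 2 := by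
    rw [hx.step k, sub_right_comm, norm_sub_sq_real, real_inner_smul_right, real_inner_comm,
      norm_smul, Real.norm_of_nonneg hlam]
    ring
  have hinner := mul_le_mul_of_nonneg_left ((hx.subgrad k).sub_add_midGap_le_inner z) hlam
  have hsq : lam k ^ 2 * ‖ν k‖ ^ 2 ≤ 2 * lam k * g (x k) :=
    calc lam k ^ 2 * ‖ν k‖ ^ 2 ≤ lam k * (lam k * M ^ 2) := by
          rw [← mul_assoc, ← sq]
          gcongr
      _ ≤ lam k * (2 * max 0 (g (x k))) := mul_le_mul_of_nonneg_left (hx.lam_mul_le k) hlam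
      _ = 2 * lam k * g (x k) := by rw [mul_left_comm, hx.lam_mul_max hM]; ring
  nlinarith

lemma norm_sub_succ_le (hx : IsPolyakSeq g M x ν lam) (hM : M ≠ 0)
    (hg : ConvexOn ℝ Set.univ g) (hνk : ‖ν k‖ ≤ M) (hgz : g z ≤ 0) :
    ‖x (k + 1) - z‖ ≤ ‖x k - z‖ := by
  have := hx.sq_norm_sub_succ_add_le hM hνk z
  have := hg.midGap_nonneg (x k) z
  have := hx.lam_nonneg k
  exact le_of_pow_le_pow_left₀ two_ne_zero (norm_nonneg _) (by nlinarith)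

lemma norm_sub_succ_lt (hx : IsPolyakSeq g M x ν lam) (hM : M ≠ 0)
    (hg : StrictConvexOn ℝ Set.univ g) (hνk : ‖ν k‖ ≤ M) (hgz : g z ≤ 0) (hk : 0 < g (x k)) :
    ‖x (k + 1) - z‖ < ‖x k - z‖ := by
  have := hx.sq_norm_sub_succ_add_le hM hνk z
  have hgap := hg.midGap_pos (a := x k) (z := z) (by rintro h; rw [h] at hk; linarith)
  have hlam : 0 < lam k := by
    refine (hx.lam_nonneg k).lt_of_ne fun h => ?_
    have := hx.le_lam_mul k
    rw [← h, zero_mul] at this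
    linarith
  exact lt_of_pow_lt_pow_left₀ 2 (norm_nonneg _) (by nlinarith)

lemma mem_closedBall_and_mem_ball (hx : IsPolyakSeq g M x ν lam) (hM : 0 < M)
    (hg : StrictConvexOn ℝ Set.univ g) {x0 : Euc n} {r : ℝ} (hr : 0 < r)
    (hLip : ∀ y z : Euc n, y ∈ closedBall x0 r → z ∈ closedBall x0 r →
      |g y - g z| ≤ M * ‖y - z‖)
    (hx0 : x 0 = x0) (hz : z ∈ closedBall x0 (r / 2)) (hgz : g z ≤ 0) (k : ℕ) :
    x k ∈ closedBall z (r / 2) ∧ x k ∈ ball x0 r := by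
  induction k with
  | zero => exact ⟨hx0 ▸ mem_closedBall_comm.1 hz, hx0 ▸ mem_ball_self hr⟩
  | succ k ih =>
    obtain ⟨hzk, hxk⟩ := ih
    have hνk := (hx.subgrad k).norm_le_of_lipschitzOn_closedBall hM.le hLip hxk
    rcases le_or_gt (g (x k)) 0 with hk | hk
    · rw [hx.succ_eq_of_nonpos hM.ne' hk]
      exact ⟨hzk, hxk⟩
    · have hlt := hx.norm_sub_succ_lt hM.ne' hg hνk hgz hk
      rw [mem_closedBall_iff_norm] at hzk hz ⊢
      rw [mem_ball_iff_norm]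
      refine ⟨by linarith, ?_⟩
      calc ‖x (k + 1) - x0‖ ≤ ‖x (k + 1) - z‖ + ‖z - x0‖ :=
            norm_sub_le_norm_sub_add_norm_sub _ _ _
        _ < r := by linarith

lemma summable_lam_mul_midGap (hx : IsPolyakSeq g M x ν lam) (hM : M ≠ 0)
    (hg : ConvexOn ℝ Set.univ g) (hνM : ∀ k, ‖ν k‖ ≤ M) (hgz : g z ≤ 0) :
    Summable fun k => lam k * midGap g (x k) z := by
  have hsum : ∀ K, 2 * ∑ k ∈ Finset.range K, lam k * midGap g (x k) z ≤
      ‖x 0 - z‖ ^ 2 - ‖x K - z‖ ^ 2 := by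
    intro K
    induction K with
    | zero => simp
    | succ K ih =>
      have := hx.sq_norm_sub_succ_add_le hM (hνM K) z
      have := mul_nonpos_of_nonneg_of_nonpos (hx.lam_nonneg K) hgz
      rw [Finset.sum_range_succ]
      linarith
  refine summable_of_sum_range_le (c := ‖x 0 - z‖ ^ 2 / 2)
    (fun k => mul_nonneg (hx.lam_nonneg k) (hg.midGap_nonneg _ _)) fun K => ?_
  linarith [hsum K, sq_nonneg ‖x K - z‖]

lemma nonpos_of_tendsto_comp (hx : IsPolyakSeq g M x ν lam) (hM : M ≠ 0)
    (hg : StrictConvexOn ℝ Set.univ g) (hνM : ∀ k, ‖ν k‖ ≤ M) (hgz : g z ≤ 0)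
    {φ : ℕ → ℕ} (hφ : StrictMono φ) {xb : Euc n} (hlim : Tendsto (x ∘ φ) atTop (𝓝 xb)) :
    g xb ≤ 0 := by
  rcases eq_or_ne xb z with rfl | hne
  · exact hgz
  have hcont : Continuous g := continuousOn_univ.1 (hg.convexOn.continuousOn isOpen_univ)
  have hgap : Tendsto (fun j => midGap g (x (φ j)) z) atTop (𝓝 (midGap g xb z)) :=
    ((hcont.midGap z).tendsto xb).comp hlim
  have hgap_pos := hg.midGap_pos hne
  have hlam_gap : Tendsto (fun j => lam (φ j) * midGap g (x (φ j)) z) atTop (𝓝 0) :=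
    (hx.summable_lam_mul_midGap hM hg.convexOn hνM hgz).tendsto_atTop_zero.comp
      hφ.tendsto_atTop
  have hlam : Tendsto (fun j => lam (φ j)) atTop (𝓝 0) := by
    have := hlam_gap.div hgap hgap_pos.ne'
    rw [zero_div] at this
    refine this.congr' ?_
    filter_upwards [hgap.eventually (eventually_gt_nhds hgap_pos)] with j hj
    exact mul_div_cancel_right₀ _ hj.ne'
  have hupper : Tendsto (fun j => lam (φ j) * M ^ 2) atTop (𝓝 0) := by
    simpa using hlam.mul_const (M ^ 2)
  exact le_of_tendsto_of_tendsto' ((hcont.tendsto xb).comp hlim) hupper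
    fun j => hx.le_lam_mul (φ j)

lemma exists_tendsto (hx : IsPolyakSeq g M x ν lam) (hM : M ≠ 0)
    (hg : StrictConvexOn ℝ Set.univ g) (hνM : ∀ k, ‖ν k‖ ≤ M)
    (hbdd : Bornology.IsBounded (Set.range x)) (hgz : g z ≤ 0) :
    ∃ xs, Tendsto x atTop (𝓝 xs) ∧ g xs ≤ 0 := by
  obtain ⟨xb, -, φ, hφ, hlim⟩ := tendsto_subseq_of_bounded hbdd (Set.mem_range_self ·)
  have hgxb := hx.nonpos_of_tendsto_comp hM hg hνM hgz hφ hlim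
  have hanti : Antitone fun k => ‖x k - xb‖ :=
    antitone_nat_of_succ_le fun k => hx.norm_sub_succ_le hM hg.convexOn (hνM k) hgxb
  refine ⟨xb, ?_, hgxb⟩
  rw [tendsto_iff_norm_sub_tendsto_zero,
    tendsto_iff_tendsto_subseq_of_antitone hanti hφ.tendsto_atTop]
  have hnorm : Continuous fun y : Euc n => ‖y - xb‖ := by fun_prop
  simpa [Function.comp_def] using (hnorm.tendsto xb).comp hlim

end IsPolyakSeq

theorem stmt1_general
    {n m : ℕ} [NeZero m] (f : Fin m → Euc n → ℝ)
    (M : ℝ) (hM : 0 < M) (x : ℕ → Euc n) (lam : ℕ → ℝ)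
    (halg : IsAlgSeq f M x lam) (x0 : Euc n) (hx0 : x 0 = x0)
    (r : ℝ) (hr : 0 < r)
    (hLip : ∀ y z : Euc n, y ∈ Metric.closedBall x0 r → z ∈ Metric.closedBall x0 r →
      |envl f y - envl f z| ≤ M * ‖y - z‖)
    (hfeas : ∃ z : Euc n, z ∈ Metric.closedBall x0 (r / 2) ∧ envl f z ≤ 0)
    (hstrict : StrictConvexOn ℝ Set.univ (envl f)) :
    ∃ xs : Euc n, Tendsto x atTop (𝓝 xs) ∧ envl f xs ≤ 0 := by
  obtain ⟨ν, hx⟩ := halg.exists_isPolyakSeq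
  obtain ⟨z, hz, hgz⟩ := hfeas
  have hinv := hx.mem_closedBall_and_mem_ball hM hstrict hr hLip hx0 hz hgz
  have hνM : ∀ k, ‖ν k‖ ≤ M := fun k =>
    (hx.subgrad k).norm_le_of_lipschitzOn_closedBall hM.le hLip (hinv k).2
  have hbdd : Bornology.IsBounded (Set.range x) :=
    isBounded_closedBall.subset (Set.range_subset_iff.2 fun k => (hinv k).1)
  exact hx.exists_tendsto hM.ne' hstrict hνM hbdd hgz

theorem stmt1
    {n m : ℕ} (hn : 0 < n) [NeZero m] (f : Fin m → Euc n → ℝ)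
    (hconv : ∀ i, ConvexOn ℝ Set.univ (f i))
    (M : ℝ) (hM : 0 < M) (x : ℕ → Euc n) (lam : ℕ → ℝ)
    (halg : IsAlgSeq f M x lam) (x0 : Euc n) (hx0 : x 0 = x0)
    (r : ℝ) (hr : 0 < r)
    (hLip : ∀ y z : Euc n, y ∈ Metric.closedBall x0 r → z ∈ Metric.closedBall x0 r →
      |envl f y - envl f z| ≤ M * ‖y - z‖)
    (hfeas : ∃ z : Euc n, z ∈ Metric.closedBall x0 (r / 2) ∧ envl f z ≤ 0)
    (hstrict : StrictConvexOn ℝ Set.univ (envl f)) :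
    ∃ xs : Euc n, Tendsto x atTop (𝓝 xs) ∧ envl f xs ≤ 0 :=
  stmt1_general f M hM x lam halg x0 hx0 r hr hLip hfeas hstrict
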